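/- Let J be a Borel-fixed monomial ideal in k[x1,x2,x3,x4] (char k = 0) with the same Hilbert function as a complete intersection of three quadrics in P^3 (Hilbert series of S/J equals (1-t^2)^3/(1-t)^4), and satisfying J : x4 = J. Then J equals either J1 = (x1^2, x1x2, x2^2, x1x3^2, x2x3^2, x3^4) or J2 = (x1^2, x1x2, x1x3, x2^3, x2^2x3, x2x3^2, x3^4). -/

import Mathlib

/-!
Because `J` is a monomial ideal with `J : x₄ = J`, a monomial lies in `J` iff its `x₄`-free part
does, so `J` is the ideal generated by the set `M` of monomials of `k[x₁,x₂,x₃]` it contains, and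
the number of monomials of `J` in degree `d + 1` exceeds that in degree `d` by the number of
monomials of `M` of degree `d + 1`. The Hilbert function `1, 4, 7, 8, 8, …` therefore says that
`M` contains no linear form, `3` of the `6` quadrics, `9` of the `10` cubics and every quartic.
Borel-fixedness makes `x₃ᵈ` the smallest monomial of degree `d`, so the missing cubic is `x₃³`;
then `x₃² ∉ M`, `x₂x₃ ∉ M` (its Borel closure has five quadrics), and the three quadrics of `M`
are `x₁², x₁x₂` together with exactly one of `x₂²`, `x₁x₃`. In either case the listed generators
lie in `J`, and every monomial of `k[x₁,x₂,x₃]` not divisible by one of them divides one of a few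
monomials known to lie outside `J`.
-/

open MvPolynomial

/-- The Hilbert function of the quotient by a complete intersection of three quadrics in `P³`:
`1, 4, 7, 8, 8, …` (the series `(1-t²)³/(1-t)⁴`). -/
def hCI : ℕ → ℕ := fun d =>
  if d = 0 then 1 else if d = 1 then 4 else if d = 2 then 7 else 8

open Finset

theorem card_le_card_filter_of_subset {α : Type*} {p : α → Prop} [DecidablePred p]
    {s t : Finset α} (hst : s ⊆ t) (hp : ∀ x ∈ s, p x) : #s ≤ #{x ∈ t | p x} :=
  card_le_card fun x hx => mem_filter.2 ⟨hst hx, hp x hx⟩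

theorem mem_of_card_le_card_filter_add_one {α : Type*} [DecidableEq α] {p : α → Prop}
    [DecidablePred p] {t : Finset α} (h : #t ≤ #{x ∈ t | p x} + 1) {x y : α} (hx : x ∈ t)
    (hpx : ¬p x) (hy : y ∈ t) (hyx : y ≠ x) : p y := by
  by_contra hpy
  have hsub : {x ∈ t | p x} ⊆ (t.erase x).erase y := fun z hz => by
    rw [mem_filter] at hz
    exact mem_erase.2 ⟨fun h => hpy (h ▸ hz.2), mem_erase.2 ⟨fun h => hpx (h ▸ hz.2), hz.1⟩⟩
  have hcard := card_le_card hsub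
  have hpos := card_pos.2 ⟨y, mem_erase.2 ⟨hyx, hy⟩⟩
  rw [card_erase_of_mem (mem_erase.2 ⟨hyx, hy⟩), card_erase_of_mem hx] at hcard
  rw [card_erase_of_mem hx] at hpos
  omega

section ExponentSets

variable {n : ℕ} {s : Set (Fin n → ℕ)}

theorem update_zero_mem_of_forall_add_single_mem (i : Fin n)
    (hs : ∀ e, e + Pi.single i 1 ∈ s → e ∈ s) (e : Fin n → ℕ) (he : e ∈ s) :
    Function.update e i 0 ∈ s := by
  induction hm : e i generalizing e with
  | zero => rwa [← hm, Function.update_eq_self]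
  | succ m ih =>
    have he' : Function.update e i m + Pi.single i 1 = e := by
      ext j; rcases eq_or_ne j i with rfl | hj <;> simp [*]
    simpa using ih (Function.update e i m) (hs _ (by rwa [he'])) (Function.update_self ..)

theorem IsUpperSet.eq_upperClosure_of_cover (hup : IsUpperSet s) (i : Fin n)
    (hs : ∀ e ∈ s, Function.update e i 0 ∈ s) {G S : Set (Fin n → ℕ)} (hG : G ⊆ s)
    (hS : ∀ x ∈ S, x ∉ s) (hcover : ∀ e, e i = 0 → (∃ g ∈ G, g ≤ e) ∨ ∃ x ∈ S, e ≤ x) :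
    s = upperClosure G := by
  ext e
  refine ⟨fun he => ?_, fun he => ?_⟩
  · have hle : Function.update e i 0 ≤ e := update_le_iff.2 ⟨Nat.zero_le _, fun _ _ => le_rfl⟩
    rcases hcover _ (Function.update_self ..) with ⟨g, hg, hge⟩ | ⟨x, hx, hex⟩
    · exact mem_upperClosure.2 ⟨g, hg, hge.trans hle⟩
    · exact absurd (hup hex (hs e he)) (hS x hx)
  · obtain ⟨g, hg, hge⟩ := mem_upperClosure.1 he
    exact hup hge (hG hg)

theorem card_filter_antidiagonalTuple_succ [DecidablePred (· ∈ s)] (i : Fin n)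
    (hs : ∀ e, e + Pi.single i 1 ∈ s ↔ e ∈ s) (d : ℕ) :
    #{e ∈ Nat.antidiagonalTuple n (d + 1) | e ∈ s} =
      #{e ∈ Nat.antidiagonalTuple n (d + 1) | e i = 0 ∧ e ∈ s} +
        #{e ∈ Nat.antidiagonalTuple n d | e ∈ s} := by
  have hsum (e : Fin n → ℕ) : ∑ j, (e + Pi.single i 1 : Fin n → ℕ) j = ∑ j, e j + 1 := by
    simp [sum_add_distrib]
  have hsub (e : Fin n → ℕ) (he : e i ≠ 0) : e - Pi.single i 1 + Pi.single i 1 = e :=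
    tsub_add_cancel_of_le fun j => by
      rcases eq_or_ne j i with rfl | hj <;> simp [*, Nat.one_le_iff_ne_zero]
  rw [← card_filter_add_card_filter_not (s := {e ∈ Nat.antidiagonalTuple n (d + 1) | e ∈ s})
    (fun e => e i = 0), filter_filter, filter_filter]
  congr 1
  · simp only [and_comm]
  symm
  refine card_nbij' (· + Pi.single i 1) (· - Pi.single i 1) ?_ ?_ ?_ ?_
  · intro e he
    simp only [coe_filter, Nat.mem_antidiagonalTuple, Set.mem_ofPred_eq] at he ⊢
    exact ⟨(hsum e).trans (by rw [he.1]), (hs e).2 he.2, by simp⟩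
  · intro e he
    simp only [coe_filter, Nat.mem_antidiagonalTuple, Set.mem_ofPred_eq] at he ⊢
    have h := hsub e he.2.2
    refine ⟨?_, (hs _).1 (by rw [h]; exact he.2.1)⟩
    have := hsum (e - Pi.single i 1)
    rw [h, he.1] at this
    omega
  · intro e _
    simp
  · intro e he
    simp only [coe_filter, Set.mem_ofPred_eq] at he
    exact hsub e he.2.2

end ExponentSets

def x4FreeTuples (d : ℕ) : Finset (Fin 4 → ℕ) := {e ∈ Nat.antidiagonalTuple 4 d | e 3 = 0}

def IsBorelClosed {n : ℕ} (s : Set (Fin n → ℕ)) : Prop :=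
  ∀ e ∈ s, ∀ i j : Fin n, j < i → 0 < e i → e - Pi.single i 1 + Pi.single j 1 ∈ s

namespace IsBorelClosed

variable {s : Set (Fin 4 → ℕ)}

theorem mem_of_borel_le (hs : IsBorelClosed s) {a b c a' b' c' : ℕ}
    (h : ![a, b, c, 0] ∈ s) (ha : a ≤ a' := by omega) (hab : a + b ≤ a' + b' := by omega)
    (habc : a' + b' + c' = a + b + c := by omega) : ![a', b', c', 0] ∈ s := by
  have h21 (m b c : ℕ) (h : ![a, b, c + m, 0] ∈ s) : ![a, b + m, c, 0] ∈ s := by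
    induction m generalizing b c with
    | zero => exact h
    | succ m ih =>
      convert hs _ (ih b (c + 1) (by rwa [add_right_comm])) 2 1 (by decide) (by simp) using 1
      funext i; fin_cases i <;> rfl
  have h10 (m a b : ℕ) (h : ![a, b + m, c', 0] ∈ s) : ![a + m, b, c', 0] ∈ s := by
    induction m generalizing a b with
    | zero => exact h
    | succ m ih =>
      convert hs _ (ih a (b + 1) (by rwa [add_right_comm])) 1 0 (by decide) (by simp) using 1
      funext i; fin_cases i <;> rfl
  obtain ⟨m, rfl⟩ : ∃ m, c = c' + m := ⟨c - c', by omega⟩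
  have := h10 (a' - a) a b' (by rw [show b' + (a' - a) = b + m by omega]; exact h21 m b c' h)
  rwa [Nat.add_sub_cancel' ha] at this

theorem forall_mem_x4FreeTuples (hs : IsBorelClosed s) {d : ℕ} (h : ![0, 0, d, 0] ∈ s) :
    ∀ e ∈ x4FreeTuples d, e ∈ s := by
  intro e he
  simp only [x4FreeTuples, mem_filter, Nat.mem_antidiagonalTuple, Fin.sum_univ_four] at he
  have he' : e = ![e 0, e 1, e 2, 0] := by
    funext i; fin_cases i <;> simp [he.2]
  rw [he']
  exact hs.mem_of_borel_le h

end IsBorelClosed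

section Classification

variable {s : Set (Fin 4 → ℕ)}

theorem card_filter_x4FreeTuples_succ [DecidablePred (· ∈ s)] (hup : IsUpperSet s)
    (hsat : ∀ e, e + Pi.single 3 1 ∈ s → e ∈ s) {h : ℕ → ℕ}
    (hcount : ∀ d, #{e ∈ Nat.antidiagonalTuple 4 d | e ∈ s} + h d = (d + 3).choose 3) (d : ℕ) :
    #{e ∈ x4FreeTuples (d + 1) | e ∈ s} =
      (d + 1 + 3).choose 3 + h d - h (d + 1) - (d + 3).choose 3 := by
  have hd := hcount (d + 1)
  rw [card_filter_antidiagonalTuple_succ 3 (fun e => ⟨hsat e, hup le_self_add⟩)] at hd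
  rw [x4FreeTuples, filter_filter, ← hcount d]
  omega

theorem IsBorelClosed.notMem_of_card_filter_lt [DecidablePred (· ∈ s)] (hB : IsBorelClosed s)
    {d : ℕ} (hd : #{e ∈ x4FreeTuples d | e ∈ s} < #(x4FreeTuples d)) : ![0, 0, d, 0] ∉ s :=
  fun h => hd.ne (card_filter_eq_iff.2 (hB.forall_mem_x4FreeTuples h))

/- Both `x₂²` and `x₁x₃` would bring four quadrics into `s`; neither leaves at most two. -/
theorem IsBorelClosed.quadrics [DecidablePred (· ∈ s)] (hB : IsBorelClosed s)
    (hup : IsUpperSet s) (h003 : ![0, 0, 3, 0] ∉ s) (hF2 : #{e ∈ x4FreeTuples 2 | e ∈ s} = 3) :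
    ![0, 1, 1, 0] ∉ s ∧ (![0, 2, 0, 0] ∈ s ↔ ![1, 0, 1, 0] ∉ s) := by
  have h002 : ![0, 0, 2, 0] ∉ s := fun h => h003 (hup (Pi.le_def.2 (by decide)) h)
  have h011 : ![0, 1, 1, 0] ∉ s := fun h => by
    have := card_le_card_filter_of_subset (p := (· ∈ s)) (t := x4FreeTuples 2)
      (s := {![0, 1, 1, 0], ![1, 0, 1, 0], ![0, 2, 0, 0], ![1, 1, 0, 0], ![2, 0, 0, 0]})
      (by decide) (by
        simp only [forall_mem_insert, mem_singleton, forall_eq]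
        exact ⟨h, hB.mem_of_borel_le h, hB.mem_of_borel_le h, hB.mem_of_borel_le h,
          hB.mem_of_borel_le h⟩)
    rw [hF2] at this
    exact absurd this (by decide)
  refine ⟨h011, fun h020 h101 => ?_, fun h101 => by_contra fun h020 => ?_⟩
  · have := card_le_card_filter_of_subset (p := (· ∈ s)) (t := x4FreeTuples 2)
      (s := {![0, 2, 0, 0], ![1, 0, 1, 0], ![1, 1, 0, 0], ![2, 0, 0, 0]})
      (by decide) (by
        simp only [forall_mem_insert, mem_singleton, forall_eq]
        exact ⟨h020, h101, hB.mem_of_borel_le h020, hB.mem_of_borel_le h020⟩)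
    rw [hF2] at this
    exact absurd this (by decide)
  · have hsub : {e ∈ x4FreeTuples 2 | e ∈ s} ⊆ {![2, 0, 0, 0], ![1, 1, 0, 0]} := by
      intro e he
      rw [mem_filter, show x4FreeTuples 2 = {![2, 0, 0, 0], ![1, 1, 0, 0], ![0, 2, 0, 0],
        ![1, 0, 1, 0], ![0, 1, 1, 0], ![0, 0, 2, 0]} by decide] at he
      simp only [mem_insert, mem_singleton] at he ⊢
      rcases he with ⟨rfl | rfl | rfl | rfl | rfl | rfl, he⟩ <;> simp_all
    have := card_le_card hsub
    rw [hF2] at this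
    exact absurd this (by decide)

theorem IsUpperSet.eq_upperClosure_gens_J₁ (hup : IsUpperSet s)
    (hsat : ∀ e ∈ s, Function.update e 3 0 ∈ s)
    (hG : {![2, 0, 0, 0], ![1, 1, 0, 0], ![0, 2, 0, 0], ![1, 0, 2, 0], ![0, 1, 2, 0],
      ![0, 0, 4, 0]} ⊆ s)
    (h101 : ![1, 0, 1, 0] ∉ s) (h011 : ![0, 1, 1, 0] ∉ s) (h003 : ![0, 0, 3, 0] ∉ s) :
    s = upperClosure {![2, 0, 0, 0], ![1, 1, 0, 0], ![0, 2, 0, 0], ![1, 0, 2, 0], ![0, 1, 2, 0],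
      ![0, 0, 4, 0]} := by
  refine hup.eq_upperClosure_of_cover 3 hsat hG (S := {![1, 0, 1, 0], ![0, 1, 1, 0], ![0, 0, 3, 0]})
    (by simpa using ⟨h101, h011, h003⟩) fun e he => ?_
  simp only [Set.mem_insert_iff, Set.mem_singleton_iff, exists_eq_or_imp, exists_eq_left,
    Pi.le_def, Fin.forall_fin_succ, IsEmpty.forall_iff, Matrix.cons_val, Fin.succ_zero_eq_one,
    Fin.succ_one_eq_two, Fin.reduceSucc, and_true]
  omega

theorem IsUpperSet.eq_upperClosure_gens_J₂ (hup : IsUpperSet s)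
    (hsat : ∀ e ∈ s, Function.update e 3 0 ∈ s)
    (hG : {![2, 0, 0, 0], ![1, 1, 0, 0], ![1, 0, 1, 0], ![0, 3, 0, 0], ![0, 2, 1, 0],
      ![0, 1, 2, 0], ![0, 0, 4, 0]} ⊆ s)
    (h100 : ![1, 0, 0, 0] ∉ s) (h020 : ![0, 2, 0, 0] ∉ s) (h011 : ![0, 1, 1, 0] ∉ s)
    (h003 : ![0, 0, 3, 0] ∉ s) :
    s = upperClosure {![2, 0, 0, 0], ![1, 1, 0, 0], ![1, 0, 1, 0], ![0, 3, 0, 0], ![0, 2, 1, 0],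
      ![0, 1, 2, 0], ![0, 0, 4, 0]} := by
  refine hup.eq_upperClosure_of_cover 3 hsat hG
    (S := {![1, 0, 0, 0], ![0, 2, 0, 0], ![0, 1, 1, 0], ![0, 0, 3, 0]})
    (by simpa using ⟨h100, h020, h011, h003⟩) fun e he => ?_
  simp only [Set.mem_insert_iff, Set.mem_singleton_iff, exists_eq_or_imp, exists_eq_left,
    Pi.le_def, Fin.forall_fin_succ, IsEmpty.forall_iff, Matrix.cons_val, Fin.succ_zero_eq_one,
    Fin.succ_one_eq_two, Fin.reduceSucc, and_true]
  omega

theorem eq_upperClosure_of_isBorelClosed [DecidablePred (· ∈ s)] (hup : IsUpperSet s)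
    (hB : IsBorelClosed s) (hsat : ∀ e, e + Pi.single 3 1 ∈ s → e ∈ s)
    (hcount : ∀ d, #{e ∈ Nat.antidiagonalTuple 4 d | e ∈ s} + hCI d = (d + 3).choose 3) :
    s = upperClosure {![2, 0, 0, 0], ![1, 1, 0, 0], ![0, 2, 0, 0], ![1, 0, 2, 0], ![0, 1, 2, 0],
      ![0, 0, 4, 0]} ∨
    s = upperClosure {![2, 0, 0, 0], ![1, 1, 0, 0], ![1, 0, 1, 0], ![0, 3, 0, 0], ![0, 2, 1, 0],
      ![0, 1, 2, 0], ![0, 0, 4, 0]} := by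
  have hF1 : #{e ∈ x4FreeTuples 1 | e ∈ s} = 0 := card_filter_x4FreeTuples_succ hup hsat hcount 0
  have hF2 : #{e ∈ x4FreeTuples 2 | e ∈ s} = 3 := card_filter_x4FreeTuples_succ hup hsat hcount 1
  have hF3 : #{e ∈ x4FreeTuples 3 | e ∈ s} = 9 := card_filter_x4FreeTuples_succ hup hsat hcount 2
  have hF4 : #{e ∈ x4FreeTuples 4 | e ∈ s} = 15 := card_filter_x4FreeTuples_succ hup hsat hcount 3
  have h100 : ![1, 0, 0, 0] ∉ s := card_filter_eq_zero_iff.1 hF1 _ (by decide)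
  have h003 : ![0, 0, 3, 0] ∉ s := hB.notMem_of_card_filter_lt (by rw [hF3]; decide)
  have hcubic (e : Fin 4 → ℕ) (he : e ∈ x4FreeTuples 3 := by decide)
      (hne : e ≠ ![0, 0, 3, 0] := by decide) : e ∈ s :=
    mem_of_card_le_card_filter_add_one (by rw [hF3]; decide) (by decide) h003 he hne
  have h004 : ![0, 0, 4, 0] ∈ s := card_filter_eq_iff.1 (hF4.trans (by decide)) _ (by decide)
  obtain ⟨h011, h020_iff⟩ := hB.quadrics hup h003 hF2
  have hsat' := update_zero_mem_of_forall_add_single_mem 3 hsat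
  by_cases h020 : ![0, 2, 0, 0] ∈ s
  · refine .inl (hup.eq_upperClosure_gens_J₁ hsat' ?_ (h020_iff.1 h020) h011 h003)
    simp only [Set.insert_subset_iff, Set.singleton_subset_iff]
    exact ⟨hB.mem_of_borel_le h020, hB.mem_of_borel_le h020, h020, hcubic _, hcubic _, h004⟩
  · have h101 : ![1, 0, 1, 0] ∈ s := not_not.1 (mt h020_iff.2 h020)
    refine .inr (hup.eq_upperClosure_gens_J₂ hsat' ?_ h100 h020 h011 h003)
    simp only [Set.insert_subset_iff, Set.singleton_subset_iff]
    exact ⟨hB.mem_of_borel_le h101, hB.mem_of_borel_le h101, h101, hcubic _, hcubic _, hcubic _,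
      h004⟩

end Classification

section MonomialIdeal

variable {R : Type*} [CommSemiring R]

theorem mem_iff_forall_monomial_mem {σ : Type*} {J : Ideal (MvPolynomial σ R)}
    (hJ : ∀ f ∈ J, ∀ I ∈ f.support, (monomial I 1 : MvPolynomial σ R) ∈ J)
    {f : MvPolynomial σ R} : f ∈ J ↔ ∀ I ∈ f.support, (monomial I 1 : MvPolynomial σ R) ∈ J := by
  refine ⟨hJ f, fun h => ?_⟩
  rw [f.as_sum]
  refine J.sum_mem fun I hI => ?_
  simpa [C_mul_monomial] using J.mul_mem_left (C (coeff I f)) (h I hI)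

variable {n : ℕ}

/- Exponents are taken as functions `Fin n → ℕ` rather than finsupps so that statements about
explicit finite sets of them can be decided by evaluation. -/
def monomialExponents (J : Ideal (MvPolynomial (Fin n) R)) : Set (Fin n → ℕ) :=
  {e | monomial (Finsupp.equivFunOnFinite.symm e) 1 ∈ J}

theorem eq_span_of_monomialExponents_eq {J : Ideal (MvPolynomial (Fin n) R)}
    (hJ : ∀ f ∈ J, ∀ I ∈ f.support, (monomial I 1 : MvPolynomial (Fin n) R) ∈ J)
    {G : Set (Fin n → ℕ)} (h : monomialExponents J = upperClosure G) :
    J = Ideal.span ((fun e => monomial (Finsupp.equivFunOnFinite.symm e) 1) '' G) := by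
  ext f
  rw [← Set.image_image (fun I => monomial I (1 : R)), mem_ideal_span_monomial_image,
    mem_iff_forall_monomial_mem hJ]
  refine forall₂_congr fun I _ => ?_
  have hI : monomial I (1 : R) ∈ J ↔ ⇑I ∈ monomialExponents J := by
    simp [monomialExponents]
  rw [hI, h, SetLike.mem_coe, mem_upperClosure]
  simp only [Finsupp.le_def, Pi.le_def]
  simpa using Finsupp.equivFunOnFinite.symm.exists_congr_left (p := fun g => g ∈ G ∧ ∀ i, g i ≤ I i)

theorem isUpperSet_monomialExponents [Nontrivial R] (J : Ideal (MvPolynomial (Fin n) R)) :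
    IsUpperSet (monomialExponents J) := fun e f hef he =>
  J.mem_of_dvd (monomial_one_dvd_monomial_one.2 (Finsupp.le_def.2 fun i => by simpa using hef i)) he

theorem isBorelClosed_monomialExponents {J : Ideal (MvPolynomial (Fin n) R)}
    (hJ : ∀ I : Fin n →₀ ℕ, (monomial I 1 : MvPolynomial (Fin n) R) ∈ J →
      ∀ i j : Fin n, j < i → 0 < I i →
        (monomial (I - Finsupp.single i 1 + Finsupp.single j 1) 1 : MvPolynomial (Fin n) R) ∈ J) :
    IsBorelClosed (monomialExponents J) := by
  intro e he i j hji hi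
  simp only [monomialExponents, Set.mem_ofPred_eq] at he ⊢
  convert hJ _ he i j hji (by simpa using hi) using 3
  ext l
  simp [Finsupp.single_apply, Pi.single_apply, eq_comm]

theorem mem_monomialExponents_of_add_single {J : Ideal (MvPolynomial (Fin n) R)} {i : Fin n}
    (hJ : J.colon ((Ideal.span {X i} : Ideal (MvPolynomial (Fin n) R)) :
      Set (MvPolynomial (Fin n) R)) = J) {e : Fin n → ℕ}
    (he : e + Pi.single i 1 ∈ monomialExponents J) : e ∈ monomialExponents J := by
  simp only [monomialExponents, Set.mem_ofPred_eq] at he ⊢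
  rw [← hJ, Ideal.mem_colon_span_singleton, X, monomial_mul, one_mul]
  convert he using 3
  ext l
  simp [Finsupp.single_apply, Pi.single_apply, eq_comm]

theorem monomial_equivFunOnFinite_symm_vec (a b c d : ℕ) :
    (monomial (Finsupp.equivFunOnFinite.symm ![a, b, c, d]) 1 : MvPolynomial (Fin 4) R) =
      X 0 ^ a * X 1 ^ b * X 2 ^ c * X 3 ^ d := by
  rw [monomial_eq, C_1, one_mul, Finsupp.prod_fintype _ _ (by simp), Fin.prod_univ_four]
  simp

end MonomialIdeal

theorem finrank_homogeneousSubmodule_inf_eq_card {k : Type*} [Field k] {n : ℕ}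
    {J : Ideal (MvPolynomial (Fin n) k)} [DecidablePred (· ∈ monomialExponents J)]
    (hJ : ∀ f ∈ J, ∀ I ∈ f.support, (monomial I 1 : MvPolynomial (Fin n) k) ∈ J) (d : ℕ) :
    Module.finrank k ↥(homogeneousSubmodule (Fin n) k d ⊓ J.restrictScalars k) =
      #{e ∈ Nat.antidiagonalTuple n d | e ∈ monomialExponents J} := by
  set S := {e ∈ Nat.antidiagonalTuple n d | e ∈ monomialExponents J}
  let b : S → MvPolynomial (Fin n) k := fun e => monomial (Finsupp.equivFunOnFinite.symm e) 1
  have hb : LinearIndependent k b :=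
    (basisMonomials (Fin n) k).linearIndependent.comp _
      (Finsupp.equivFunOnFinite.symm.injective.comp Subtype.val_injective)
  suffices homogeneousSubmodule (Fin n) k d ⊓ J.restrictScalars k =
      Submodule.span k (Set.range b) by
    rw [this, finrank_span_eq_card hb, Fintype.card_coe]
  apply le_antisymm
  · rintro f ⟨hfd, hfJ⟩
    rw [f.as_sum]
    refine Submodule.sum_mem _ fun I hI => ?_
    have hIS : ⇑I ∈ S := by
      have hdeg : I.degree = d := by
        rw [Finsupp.degree_eq_weight_one]; exact hfd (mem_support_iff.1 hI)
      rw [Finsupp.degree_eq_sum] at hdeg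
      refine mem_filter.2 ⟨Nat.mem_antidiagonalTuple.2 hdeg, ?_⟩
      simpa [monomialExponents] using hJ f hfJ I hI
    rw [← mul_one (coeff I f), ← smul_eq_mul, ← smul_monomial]
    exact Submodule.smul_mem _ _ (Submodule.subset_span ⟨⟨_, hIS⟩, by simp [b]⟩)
  · rw [Submodule.span_le]
    rintro _ ⟨⟨e, he⟩, rfl⟩
    simp only [S, mem_filter, Nat.mem_antidiagonalTuple] at he
    refine ⟨isHomogeneous_monomial _ ?_, he.2⟩
    simpa [Finsupp.degree_eq_sum] using he.1

theorem stmt_13_general (k : Type*) [Field k]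
    (J : Ideal (MvPolynomial (Fin 4) k))
    -- `J` is a monomial ideal
    (hmono : ∀ f ∈ J, ∀ I ∈ f.support, (monomial I 1 : MvPolynomial (Fin 4) k) ∈ J)
    -- `J` is Borel-fixed: `m ∈ J`, `xᵢ ∣ m`, `j < i` implies `m·xⱼ/xᵢ ∈ J`
    (hborel : ∀ I : Fin 4 →₀ ℕ, (monomial I 1 : MvPolynomial (Fin 4) k) ∈ J →
      ∀ i j : Fin 4, j < i → 0 < I i →
        (monomial (I - Finsupp.single i 1 + Finsupp.single j 1) 1 :
          MvPolynomial (Fin 4) k) ∈ J)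
    -- `J` has the Hilbert function of a complete intersection of three quadrics
    (hhilb : ∀ d : ℕ,
      Module.finrank k
        ↥(homogeneousSubmodule (Fin 4) k d ⊓ J.restrictScalars k) + hCI d
        = (d + 3).choose 3)
    -- `J : x₄ = J`
    (hsat : J.colon ((Ideal.span {X 3} : Ideal (MvPolynomial (Fin 4) k)) :
      Set (MvPolynomial (Fin 4) k)) = J) :
    J = Ideal.span {X 0 ^ 2, X 0 * X 1, X 1 ^ 2, X 0 * X 2 ^ 2, X 1 * X 2 ^ 2, X 2 ^ 4} ∨
    J = Ideal.span {X 0 ^ 2, X 0 * X 1, X 0 * X 2, X 1 ^ 3, X 1 ^ 2 * X 2,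
      X 1 * X 2 ^ 2, X 2 ^ 4} := by
  classical
  have hcount (d : ℕ) :
      #{e ∈ Nat.antidiagonalTuple 4 d | e ∈ monomialExponents J} + hCI d = (d + 3).choose 3 := by
    rw [← finrank_homogeneousSubmodule_inf_eq_card hmono]
    exact hhilb d
  rcases eq_upperClosure_of_isBorelClosed (isUpperSet_monomialExponents J)
    (isBorelClosed_monomialExponents hborel)
    (fun _ => mem_monomialExponents_of_add_single hsat) hcount with h | h
  · left
    rw [eq_span_of_monomialExponents_eq hmono h]
    simp [Set.image_insert_eq, monomial_equivFunOnFinite_symm_vec]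
  · right
    rw [eq_span_of_monomialExponents_eq hmono h]
    simp [Set.image_insert_eq, monomial_equivFunOnFinite_symm_vec]

/-- Section 6: a Borel-fixed monomial ideal `J ⊆ k[x₁,x₂,x₃,x₄]` (char `k = 0`) with the Hilbert
function of a complete intersection of three quadrics and with `J : x₄ = J` is one of
`J₁ = (x₁², x₁x₂, x₂², x₁x₃², x₂x₃², x₃⁴)` or
`J₂ = (x₁², x₁x₂, x₁x₃, x₂³, x₂²x₃, x₂x₃², x₃⁴)`.
(Here `x₁ = X 0, x₂ = X 1, x₃ = X 2, x₄ = X 3`.) -/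
theorem stmt_13 (k : Type*) [Field k] [CharZero k]
    (J : Ideal (MvPolynomial (Fin 4) k))
    -- `J` is a monomial ideal
    (hmono : ∀ f ∈ J, ∀ I ∈ f.support, (monomial I 1 : MvPolynomial (Fin 4) k) ∈ J)
    -- `J` is Borel-fixed: `m ∈ J`, `xᵢ ∣ m`, `j < i` implies `m·xⱼ/xᵢ ∈ J`
    (hborel : ∀ I : Fin 4 →₀ ℕ, (monomial I 1 : MvPolynomial (Fin 4) k) ∈ J →
      ∀ i j : Fin 4, j < i → 0 < I i →
        (monomial (I - Finsupp.single i 1 + Finsupp.single j 1) 1 :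
          MvPolynomial (Fin 4) k) ∈ J)
    -- `J` has the Hilbert function of a complete intersection of three quadrics
    (hhilb : ∀ d : ℕ,
      Module.finrank k
        ↥(homogeneousSubmodule (Fin 4) k d ⊓ J.restrictScalars k) + hCI d
        = (d + 3).choose 3)
    -- `J : x₄ = J`
    (hsat : J.colon ((Ideal.span {X 3} : Ideal (MvPolynomial (Fin 4) k)) :
      Set (MvPolynomial (Fin 4) k)) = J) :
    J = Ideal.span {X 0 ^ 2, X 0 * X 1, X 1 ^ 2, X 0 * X 2 ^ 2, X 1 * X 2 ^ 2, X 2 ^ 4} ∨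
    J = Ideal.span {X 0 ^ 2, X 0 * X 1, X 0 * X 2, X 1 ^ 3, X 1 ^ 2 * X 2,
      X 1 * X 2 ^ 2, X 2 ^ 4} :=
  stmt_13_general k J hmono hborel hhilb hsat
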